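/- Let 𝒯 be a set of k rooted phylogenetic trees and let (𝒜_L, 𝒜_R) be a bipartite of a cut-subforest 𝒜 of 𝒯. If Y_L and Y_R are embedded supertrees of 𝒜_L and 𝒜_R respectively, then the tree Y formed by connecting Y_L and Y_R to a new common root is an embedded supertree of 𝒜. -/

import Mathlib

/-- Rooted, unordered, leaf-labelled trees:
a tree is a single labelled leaf, or an (internal) root node with a list of subtrees
attached to it.  Being unordered, such trees are considered up to the
isomorphism `PTree.Iso` below.  The empty tree is represented by `none` in
`Option (PTree α)`. -/
inductive PTree (α : Type) : Type where
  | leaf : α → PTree α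
  | node : List (PTree α) → PTree α

namespace PTree

variable {α : Type} [DecidableEq α]

theorem sizeOf_lt_of_mem {α : Type} {c : PTree α} {cs : List (PTree α)}
    (h : c ∈ cs) : sizeOf c < sizeOf (PTree.node cs) := by
  have := List.sizeOf_lt_of_mem h
  simp only [node.sizeOf_spec]; omega

/-- `Subtree s t` : `s` is the complete subtree rooted at some node of `t`. -/
inductive Subtree : PTree α → PTree α → Prop where
  | refl (t : PTree α) : Subtree t t
  | child {s c : PTree α} {cs : List (PTree α)} :
      c ∈ cs → Subtree s c → Subtree s (node cs)

/-- The list of leaf labels of a tree. -/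
def labelList : PTree α → List α
  | leaf a => [a]
  | node cs => cs.attach.flatMap (fun c => labelList c.1)
decreasing_by exact sizeOf_lt_of_mem c.2

/-- The set `L(T)` of leaf labels of a tree. -/
def labels (t : PTree α) : Finset α := t.labelList.toFinset

/-- The size of a tree: the number of its leaves. -/
def treeSize (t : PTree α) : ℕ := t.labels.card

/-- The label set of a possibly empty tree. -/
def olabels : Option (PTree α) → Finset α
  | none => ∅
  | some t => t.labels

/-- Connecting a list of trees by a common root.  The empty list yields the
empty tree and a single tree yields that tree itself (no degree-two node is
created). -/
def connect : List (PTree α) → Option (PTree α)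
  | [] => none
  | [t] => some t
  | ts => some (node ts)

/-- The restriction `T|S` of `T` to a label set `S`: all leaves with labels
outside `S` are removed and all internal nodes of degree two are suppressed. -/
def restrict (S : Finset α) : PTree α → Option (PTree α)
  | leaf a => if a ∈ S then some (leaf a) else none
  | node cs => connect ((cs.attach.map (fun c => restrict S c.1)).reduceOption)
decreasing_by exact sizeOf_lt_of_mem c.2

/-- Restriction of a possibly empty tree. -/
def orestrict (S : Finset α) (t : Option (PTree α)) : Option (PTree α) :=
  t.bind (restrict S)

/-- Isomorphism (equality) of unordered leaf-labelled trees: equality of trees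
up to reordering of the children of each node. -/
inductive Iso : PTree α → PTree α → Prop where
  | leaf (a : α) : Iso (leaf a) (leaf a)
  | node {cs ds ds' : List (PTree α)} :
      List.Forall₂ Iso cs ds' → ds'.Perm ds → Iso (node cs) (node ds)

/-- One edge contraction: the edge between a node and one of its (internal)
children is contracted, merging the child into the parent. -/
inductive Contract : PTree α → PTree α → Prop where
  | top (l r ds : List (PTree α)) :
      Contract (node (l ++ node ds :: r)) (node (l ++ ds ++ r))
  | child {c c' : PTree α} (l r : List (PTree α)) :
      Contract c c' → Contract (node (l ++ c :: r)) (node (l ++ c' :: r))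

/-- `T` refines `T'` (written `T ⊵ T'`): `T'` can be obtained (as an
unordered tree) by contracting some edges of `T`. -/
def Refines (t t' : PTree α) : Prop :=
  ∃ u, Relation.ReflTransGen Contract t u ∧ Iso u t'

/-- Refinement of possibly empty trees. -/
def ORefines : Option (PTree α) → Option (PTree α) → Prop
  | none, none => True
  | some a, some b => Refines a b
  | _, _ => False

/-- Isomorphism (equality) of possibly empty unordered trees. -/
def OIso : Option (PTree α) → Option (PTree α) → Prop
  | none, none => True
  | some a, some b => Iso a b
  | _, _ => False

/-- A possibly empty tree is (empty or) a complete subtree of `T`. -/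
def OSubtree (T : PTree α) : Option (PTree α) → Prop
  | none => True
  | some t => Subtree t T

/-- No internal node of degree two (after the usual suppression convention):
every internal node of the rooted tree has at least two children. -/
def NoUnaryNodes (T : PTree α) : Prop :=
  ∀ cs : List (PTree α), Subtree (node cs) T → 2 ≤ cs.length

/-- Every node of the rooted tree has degree at most `D` (the degree of the
root is its number of children; the degree of any other internal node is its
number of children plus one). -/
def DegLE (D : ℕ) (T : PTree α) : Prop :=
  (∀ cs : List (PTree α), T = node cs → cs.length ≤ D) ∧
  (∀ cs : List (PTree α), Subtree (node cs) T → node cs ≠ T → cs.length + 1 ≤ D)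

/-- A rooted tree is binary if every internal node has exactly two children. -/
def Binary (T : PTree α) : Prop :=
  ∀ cs : List (PTree α), Subtree (node cs) T → cs.length = 2

/-- A cut-subtree of `T`: the empty tree, or the tree obtained by selecting
some (at least one) of the subtrees attached to an internal node of `T` and
connecting those subtrees by a common root. -/
def IsCutSubtree (T : PTree α) (a : Option (PTree α)) : Prop :=
  a = none ∨ ∃ cs sel : List (PTree α),
    Subtree (node cs) T ∧ sel.Sublist cs ∧ sel ≠ [] ∧ a = connect sel

variable {k : ℕ}

/-- A cut-subforest of `𝒯`: each component is a cut-subtree of the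
corresponding tree, and at least one component is nonempty. -/
def IsCutSubforest (𝒯 : Fin k → PTree α) (A : Fin k → Option (PTree α)) : Prop :=
  (∀ i, IsCutSubtree (𝒯 i) (A i)) ∧ ∃ i, A i ≠ none

/-- A sub-forest of `𝒯`: each component is the empty tree or a complete
subtree rooted at some node of the corresponding tree, and at least one
component is nonempty. -/
def IsSubForest (𝒯 : Fin k → PTree α) (A : Fin k → Option (PTree α)) : Prop :=
  (∀ i, OSubtree (𝒯 i) (A i)) ∧ ∃ i, A i ≠ none

/-- The set of all labels occurring in the trees of `𝒯`. -/
def allLabels (𝒯 : Fin k → PTree α) : Finset α :=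
  Finset.univ.biUnion fun i => (𝒯 i).labels

/-- A (cut-sub)forest is terminal if each component is the empty tree or a
single leaf of the corresponding tree. -/
def IsTerminal (𝒯 : Fin k → PTree α) (A : Fin k → Option (PTree α)) : Prop :=
  ∀ i, A i = none ∨ ∃ a : α, A i = some (leaf a) ∧ Subtree (leaf a) (𝒯 i)

/-- `Λ(𝒜) = { l ∈ ⋃_j L(𝒜⁽ʲ⁾) ∣ ∀ i, l ∉ L(𝒯⁽ⁱ⁾) − L(𝒜⁽ⁱ⁾) }`. -/
def lambdaSet (𝒯 : Fin k → PTree α) (A : Fin k → Option (PTree α)) : Finset α :=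
  (Finset.univ.biUnion fun j => olabels (A j)).filter
    fun l => ∀ i, l ∉ (𝒯 i).labels \ olabels (A i)

/-- `Y` is a compatible supertree of the forest `A`:
`Y|L(A⁽ⁱ⁾) ⊵ A⁽ⁱ⁾|L(Y)` for every `i`. -/
def IsCompatibleSupertree (A : Fin k → Option (PTree α)) (Y : PTree α) : Prop :=
  ∀ i, ORefines (restrict (olabels (A i)) Y) (orestrict Y.labels (A i))

/-- `X` is an agreement supertree of the forest `A`:
`X|L(A⁽ⁱ⁾) = A⁽ⁱ⁾|L(X)` (as unordered trees) for every `i`. -/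
def IsAgreementSupertree (A : Fin k → Option (PTree α)) (X : PTree α) : Prop :=
  ∀ i, OIso (restrict (olabels (A i)) X) (orestrict X.labels (A i))

/-- An embedded supertree of a cut-subforest `A` of `𝒯`: a distinctly
leaf-labelled compatible supertree `Y` of `A`, with leaves labelled by labels
of `𝒯`, such that `L(Y) ∩ L(𝒯⁽ⁱ⁾) ⊆ L(A⁽ⁱ⁾)` for all `i`. -/
def IsEmbeddedSupertree (𝒯 : Fin k → PTree α) (A : Fin k → Option (PTree α))
    (Y : PTree α) : Prop :=
  Y.labelList.Nodup ∧ Y.labels ⊆ allLabels 𝒯 ∧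
  IsCompatibleSupertree A Y ∧
  ∀ i, Y.labels ∩ (𝒯 i).labels ⊆ olabels (A i)

/-- An enclosed supertree of a sub-forest `A` of `𝒯`: a distinctly
leaf-labelled agreement supertree `X` of `A`, with leaves labelled by labels
of `𝒯`, such that `L(X) ∩ L(𝒯⁽ⁱ⁾) ⊆ L(A⁽ⁱ⁾)` for all `i`. -/
def IsEnclosedSupertree (𝒯 : Fin k → PTree α) (A : Fin k → Option (PTree α))
    (X : PTree α) : Prop :=
  X.labelList.Nodup ∧ X.labels ⊆ allLabels 𝒯 ∧
  IsAgreementSupertree A X ∧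
  ∀ i, X.labels ∩ (𝒯 i).labels ⊆ olabels (A i)

/-- `mcsp 𝒯 A` : the maximum size of an embedded supertree of `A`. -/
noncomputable def mcsp (𝒯 : Fin k → PTree α) (A : Fin k → Option (PTree α)) : ℕ :=
  sSup {m : ℕ | ∃ Y : PTree α, IsEmbeddedSupertree 𝒯 A Y ∧ m = Y.treeSize}

/-- `masp 𝒯 A` : the maximum size of an enclosed supertree of `A`. -/
noncomputable def masp (𝒯 : Fin k → PTree α) (A : Fin k → Option (PTree α)) : ℕ :=
  sSup {m : ℕ | ∃ X : PTree α, IsEnclosedSupertree 𝒯 A X ∧ m = X.treeSize}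

end PTree

/-- `ListSplit s l r` : the list `s` is partitioned into the two
(complementary) sublists `l` and `r`. -/
inductive ListSplit {β : Type} : List β → List β → List β → Prop where
  | nil : ListSplit [] [] []
  | left {s l r : List β} (x : β) : ListSplit s l r → ListSplit (x :: s) (x :: l) r
  | right {s l r : List β} (x : β) : ListSplit s l r → ListSplit (x :: s) l (x :: r)

namespace PTree

variable {α : Type} [DecidableEq α] {k : ℕ}

/-- `(AL, AR)` is a bipartite of the forest `A`: for every `i` the set of
subtrees attached to the root of `A⁽ⁱ⁾` is partitioned into two sets, each of
which is connected by a common root to form `AL⁽ⁱ⁾` resp. `AR⁽ⁱ⁾` (an empty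
set of subtrees yielding the empty tree). -/
def IsBipartite (A AL AR : Fin k → Option (PTree α)) : Prop :=
  ∀ i, ∃ s sL sR : List (PTree α),
    A i = connect s ∧ ListSplit s sL sR ∧ AL i = connect sL ∧ AR i = connect sR

/-- Condition, at one component, for `(b 1, …, b d)` to decompose `a`:
either exactly one `b j` is isomorphic to `a` and the others are empty, or at
least two of the `b j` are nonempty and the nonempty ones are isomorphic to
pairwise distinct subtrees attached to the root of `a`. -/
def DecompAt {d : ℕ} (a : Option (PTree α)) (b : Fin d → Option (PTree α)) : Prop :=
  (∃ j, OIso (b j) a ∧ ∀ j', j' ≠ j → b j' = none) ∨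
  (∃ cs : List (PTree α), a = some (node cs) ∧
    2 ≤ (Finset.univ.filter fun j => (b j).isSome).card ∧
    ∃ idx : Fin d → Option (Fin cs.length),
      (∀ j, b j = none ↔ idx j = none) ∧
      (∀ j t m, b j = some t → idx j = some m → Iso t (cs.get m)) ∧
      (∀ j j' m, idx j = some m → idx j' = some m → j = j'))

/-- `(B 1, …, B d)` is a decomposition of the forest `A` (each `B j` being a
possibly empty sub-forest of `𝒯`). -/
def IsDecomposition (𝒯 : Fin k → PTree α) (A : Fin k → Option (PTree α))
    (d : ℕ) (B : Fin d → Fin k → Option (PTree α)) : Prop :=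
  2 ≤ d ∧ (∀ j i, OSubtree (𝒯 i) (B j i)) ∧ ∀ i, DecompAt (A i) fun j => B j i

/-- The root of the (nonempty) cut-subtree `a` is an internal node of `T`,
i.e. `a` is the complete subtree of `T` rooted at an internal node of `T`. -/
def InternalRooted (T : PTree α) : Option (PTree α) → Prop
  | none => False
  | some t => (∃ cs : List (PTree α), t = node cs) ∧ Subtree t T

/-- One rerooting step: the root is moved to an adjacent internal node. -/
inductive Reroot1 : PTree α → PTree α → Prop where
  | step (l r ds : List (PTree α)) :
      Reroot1 (node (l ++ node ds :: r)) (node (ds ++ [node (l ++ r)]))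

/-- `F` is a rooted variant of the unrooted tree (represented by) `T`:
`F` is obtained by rooting `T` at some internal node. -/
def RootedVariant (T F : PTree α) : Prop := Relation.ReflTransGen Reroot1 T F

/-- A maximal subtree of the unrooted tree (represented by) `T`: a rooted tree
obtained by first rooting `T` at some internal node and then removing at most
one nontrivial subtree attached to that node. -/
def IsMaximalSubtree (T A : PTree α) : Prop :=
  ∃ cs : List (PTree α), RootedVariant T (node cs) ∧
    (A = node cs ∨ ∃ l r ds : List (PTree α), cs = l ++ node ds :: r ∧ A = node (l ++ r))

/-- `T` (a rooted tree, rooted at an internal node) represents an unrooted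
tree without vertices of degree two: the root has at least three neighbours
and every other internal vertex has at least three neighbours as well. -/
def IsUnrootedRep (T : PTree α) : Prop :=
  (∃ cs : List (PTree α), T = node cs ∧ 3 ≤ cs.length) ∧
  ∀ cs : List (PTree α), Subtree (node cs) T → node cs ≠ T → 2 ≤ cs.length

end PTree

/-!
Fix a tree `𝒯⁽ⁱ⁾`. Since `𝒜⁽ⁱ⁾` is a cut-subtree of the distinctly labelled `𝒯⁽ⁱ⁾`, the label
sets of `𝒜_L⁽ⁱ⁾` and `𝒜_R⁽ⁱ⁾` are disjoint subsets of `L(𝒯⁽ⁱ⁾)` whose union is `L(𝒜⁽ⁱ⁾)`. The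
embedding condition `L(Y_L) ∩ L(𝒯⁽ⁱ⁾) ⊆ L(𝒜_L⁽ⁱ⁾)` then keeps `L(Y_L)` away from `L(𝒜_R⁽ⁱ⁾)`, and
symmetrically; in particular `L(Y_L)` and `L(Y_R)` are disjoint. Consequently `Y|L(𝒜⁽ⁱ⁾)` joins
`Y_L|L(𝒜_L⁽ⁱ⁾)` and `Y_R|L(𝒜_R⁽ⁱ⁾)` at its root, while `𝒜⁽ⁱ⁾|L(Y)` joins at its root the subtrees of
`𝒜_L⁽ⁱ⁾|L(Y_L)` and of `𝒜_R⁽ⁱ⁾|L(Y_R)`. Refining each side separately and then contracting the edge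
from the root of `Y` to each side that is not a single subtree gives `Y|L(𝒜⁽ⁱ⁾) ⊵ 𝒜⁽ⁱ⁾|L(Y)`.
-/

namespace ListSplit

variable {β γ : Type} {s l r : List β}

theorem perm (h : ListSplit s l r) : s.Perm (l ++ r) := by
  induction h with
  | nil => rfl
  | left x _ ih => exact ih.cons x
  | right x _ ih => exact (ih.cons x).trans List.perm_middle.symm

theorem map (f : β → γ) (h : ListSplit s l r) : ListSplit (s.map f) (l.map f) (r.map f) := by
  induction h with
  | nil => exact .nil
  | left x _ ih => exact .left (f x) ih
  | right x _ ih => exact .right (f x) ih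

theorem reduceOption {s l r : List (Option β)} (h : ListSplit s l r) :
    ListSplit s.reduceOption l.reduceOption r.reduceOption := by
  induction h with
  | nil => exact .nil
  | left x _ ih => cases x with
    | none => simpa using ih
    | some a => simpa using ih.left a
  | right x _ ih => cases x with
    | none => simpa using ih
    | some a => simpa using ih.right a

theorem eq_right_of_left_eq_nil (h : ListSplit s [] r) : s = r := by
  generalize hl : ([] : List β) = l at h
  induction h with
  | nil => rfl
  | left => simp at hl
  | right x _ ih => rw [ih hl]

theorem eq_left_of_right_eq_nil (h : ListSplit s l []) : s = l := by
  generalize hr : ([] : List β) = r at h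
  induction h with
  | nil => rfl
  | left x _ ih => rw [ih hr]
  | right => simp at hr

end ListSplit

namespace PTree

variable {α : Type}

theorem labelList_node (cs : List (PTree α)) :
    (node cs).labelList = cs.flatMap labelList := by
  rw [labelList, ← List.attach_map_subtype_val cs, List.flatMap_map]
  simp

theorem connect_eq_none {ts : List (PTree α)} : connect ts = none ↔ ts = [] := by
  match ts with
  | [] | [_] | _ :: _ :: _ => simp [connect]

theorem connect_of_two_le {ts : List (PTree α)} (h : 2 ≤ ts.length) :
    connect ts = some (node ts) := by
  match ts with
  | [] | [_] => simp at h
  | _ :: _ :: _ => rfl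

theorem connect_eq_some {ts : List (PTree α)} {t : PTree α} (h : connect ts = some t) :
    ts = [t] ∨ t = node ts := by
  match ts with
  | [] => simp [connect] at h
  | [_] => simp_all [connect]
  | _ :: _ :: _ => exact .inr (Option.some_inj.mp h).symm

theorem flatMap_labelList_connect (ts : List (PTree α)) :
    (connect ts).toList.flatMap labelList = ts.flatMap labelList := by
  match ts with
  | [] | [_] => simp [connect]
  | _ :: _ :: _ => simp [connect, labelList_node]

theorem labelList_sublist_of_mem {c : PTree α} {cs : List (PTree α)} (h : c ∈ cs) :
    c.labelList.Sublist (node cs).labelList := by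
  simpa [labelList_node] using (List.singleton_sublist.mpr h).flatMap labelList

theorem Subtree.labelList_sublist {t T : PTree α} (h : Subtree t T) :
    t.labelList.Sublist T.labelList := by
  induction h with
  | refl => exact .refl _
  | child hmem _ ih => exact ih.trans (labelList_sublist_of_mem hmem)

theorem IsCutSubtree.flatMap_labelList_sublist {T : PTree α} {s : List (PTree α)}
    (h : IsCutSubtree T (connect s)) : (s.flatMap labelList).Sublist T.labelList := by
  rw [← flatMap_labelList_connect]
  rcases h with h | ⟨cs, sel, hsub, hsel, -, h⟩
  · simp [h]
  · rw [h, flatMap_labelList_connect]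
    exact (hsel.flatMap labelList).trans (labelList_node cs ▸ hsub.labelList_sublist)

theorem reflTransGen_contract_child {c c' : PTree α} (l r : List (PTree α))
    (h : Relation.ReflTransGen Contract c c') :
    Relation.ReflTransGen Contract (node (l ++ c :: r)) (node (l ++ c' :: r)) := by
  induction h with
  | refl => rfl
  | tail _ hstep ih => exact ih.tail (.child l r hstep)

theorem exists_contract_child_of_iso_connect {u t : PTree α} {q : List (PTree α)}
    (hiso : Iso u t) (hq : connect q = some t) (l r : List (PTree α)) :
    ∃ e q', Relation.ReflTransGen Contract (node (l ++ u :: r)) (node (l ++ e ++ r)) ∧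
      List.Forall₂ Iso e q' ∧ q'.Perm q := by
  rcases connect_eq_some hq with rfl | rfl
  · exact ⟨[u], [t], by simp [Relation.ReflTransGen.refl], .cons hiso .nil, .rfl⟩
  · cases hiso with
    | node hf hp => exact ⟨_, _, .single (.top l r _), hf, hp⟩

theorem Refines.node_pair {yL yR tL tR : PTree α} {qL qR qs : List (PTree α)}
    (hL : Refines yL tL) (hR : Refines yR tR) (hqL : connect qL = some tL)
    (hqR : connect qR = some tR) (hsplit : ListSplit qs qL qR) :
    Refines (node [yL, yR]) (node qs) := by
  obtain ⟨uL, hyuL, huL⟩ := hL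
  obtain ⟨uR, hyuR, huR⟩ := hR
  have hyu : Relation.ReflTransGen Contract (node [yL, yR]) (node [uL, uR]) :=
    (reflTransGen_contract_child [] [yR] hyuL).trans (reflTransGen_contract_child [uL] [] hyuR)
  obtain ⟨eL, qL', hcL, hfL, hpL⟩ := exists_contract_child_of_iso_connect huL hqL [] [uR]
  obtain ⟨eR, qR', hcR, hfR, hpR⟩ := exists_contract_child_of_iso_connect huR hqR eL []
  refine ⟨node (eL ++ eR), hyu.trans (hcL.trans ?_), .node (List.rel_append hfL hfR) ?_⟩
  · simpa using hcR
  · exact (hpL.append hpR).trans hsplit.perm.symm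

theorem oRefines_none_left {b : Option (PTree α)} : ORefines none b ↔ b = none := by
  cases b <;> simp [ORefines]

theorem ORefines.connect_pair {a b : Option (PTree α)} {qL qR qs : List (PTree α)}
    (hL : ORefines a (connect qL)) (hR : ORefines b (connect qR)) (hsplit : ListSplit qs qL qR) :
    ORefines (connect [a, b].reduceOption) (connect qs) := by
  rcases a with _ | a <;> rcases b with _ | b
  · rw [oRefines_none_left, connect_eq_none] at hL hR
    subst hL hR
    rw [hsplit.eq_right_of_left_eq_nil]
    trivial
  · rw [oRefines_none_left, connect_eq_none] at hL
    subst hL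
    simpa [hsplit.eq_right_of_left_eq_nil, connect] using hR
  · rw [oRefines_none_left, connect_eq_none] at hR
    subst hR
    simpa [hsplit.eq_left_of_right_eq_nil, connect] using hL
  · obtain ⟨tL, hqL⟩ : ∃ t, connect qL = some t :=
      Option.ne_none_iff_exists'.mp fun h => by simp [h, ORefines] at hL
    obtain ⟨tR, hqR⟩ : ∃ t, connect qR = some t :=
      Option.ne_none_iff_exists'.mp fun h => by simp [h, ORefines] at hR
    rw [hqL] at hL
    rw [hqR] at hR
    have hlen : 2 ≤ qs.length := by
      have h1 : qL ≠ [] := fun h => by simp [h, connect] at hqL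
      have h2 : qR ≠ [] := fun h => by simp [h, connect] at hqR
      rw [hsplit.perm.length_eq, List.length_append]
      have := List.length_pos_iff.mpr h1
      have := List.length_pos_iff.mpr h2
      omega
    rw [connect_of_two_le hlen]
    exact hL.node_pair hR hqL hqR hsplit

section

variable [DecidableEq α]

theorem mem_labels {x : α} {t : PTree α} : x ∈ t.labels ↔ x ∈ t.labelList :=
  List.mem_toFinset

theorem labels_node_pair (t u : PTree α) : (node [t, u]).labels = t.labels ∪ u.labels := by
  ext x
  simp [mem_labels, labelList_node]

theorem olabels_connect (ts : List (PTree α)) :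
    olabels (connect ts) = (ts.flatMap labelList).toFinset := by
  rw [← flatMap_labelList_connect]
  cases connect ts <;> simp [olabels, labels]

theorem labels_subset_olabels_connect {t : PTree α} {ts : List (PTree α)} (h : t ∈ ts) :
    t.labels ⊆ olabels (connect ts) := by
  intro x hx
  rw [olabels_connect, List.mem_toFinset, List.mem_flatMap]
  exact ⟨t, h, mem_labels.mp hx⟩

theorem olabels_connect_of_listSplit {s sL sR : List (PTree α)} (h : ListSplit s sL sR) :
    olabels (connect s) = olabels (connect sL) ∪ olabels (connect sR) := by
  ext x
  simp [olabels_connect, List.mem_flatMap, h.perm.mem_iff, or_and_right, exists_or]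

theorem disjoint_olabels_connect_of_listSplit {T : PTree α} {s sL sR : List (PTree α)}
    (hT : T.labelList.Nodup) (hcut : IsCutSubtree T (connect s)) (h : ListSplit s sL sR) :
    Disjoint (olabels (connect sL)) (olabels (connect sR)) := by
  have hnd : (sL.flatMap labelList ++ sR.flatMap labelList).Nodup := by
    rw [← List.flatMap_append]
    exact (h.perm.flatMap_right labelList).nodup_iff.mp (hcut.flatMap_labelList_sublist.nodup hT)
  rw [olabels_connect, olabels_connect, List.disjoint_toFinset_iff_disjoint]
  exact List.disjoint_of_nodup_append hnd

theorem IsCutSubtree.olabels_subset {T : PTree α} {a : Option (PTree α)}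
    (h : IsCutSubtree T a) : olabels a ⊆ T.labels := by
  obtain ⟨s, rfl⟩ : ∃ s, a = connect s := by
    rcases h with rfl | ⟨-, sel, -, -, -, rfl⟩
    exacts [⟨[], rfl⟩, ⟨sel, rfl⟩]
  intro x hx
  rw [olabels_connect, List.mem_toFinset] at hx
  exact mem_labels.mpr (h.flatMap_labelList_sublist.subset hx)

theorem restrict_node (S : Finset α) (cs : List (PTree α)) :
    restrict S (node cs) = connect ((cs.map (restrict S)).reduceOption) := by
  rw [restrict, ← List.attach_map_subtype_val cs, List.map_map]
  simp

theorem orestrict_connect (S : Finset α) (ts : List (PTree α)) :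
    orestrict S (connect ts) = connect ((ts.map (restrict S)).reduceOption) := by
  match ts with
  | [] => rfl
  | [t] => cases h : restrict S t <;> simp [connect, orestrict, List.reduceOption, h]
  | _ :: _ :: _ => exact restrict_node S _

theorem restrict_congr {S S' : Finset α} :
    ∀ t : PTree α, (∀ x ∈ t.labelList, x ∈ S ↔ x ∈ S') → restrict S t = restrict S' t
  | leaf a, h => by simp [restrict, h a (by simp [labelList])]
  | node cs, h => by
    rw [restrict_node, restrict_node, List.map_congr_left fun c hc =>
      restrict_congr c fun x hx => h x ((labelList_sublist_of_mem hc).subset hx)]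
decreasing_by exact sizeOf_lt_of_mem hc

theorem restrict_union_of_disjoint {S S' : Finset α} {t : PTree α} (h : Disjoint t.labels S') :
    restrict (S ∪ S') t = restrict S t :=
  restrict_congr t fun x hx => by simp [Finset.disjoint_left.mp h (mem_labels.mpr hx)]

theorem oRefines_restrict_node_pair {s sL sR : List (PTree α)} (hsplit : ListSplit s sL sR)
    {YL YR : PTree α}
    (hL : ORefines (restrict (olabels (connect sL)) YL) (orestrict YL.labels (connect sL)))
    (hR : ORefines (restrict (olabels (connect sR)) YR) (orestrict YR.labels (connect sR)))
    (hdL : Disjoint YL.labels (olabels (connect sR)))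
    (hdR : Disjoint YR.labels (olabels (connect sL))) :
    ORefines (restrict (olabels (connect s)) (node [YL, YR]))
      (orestrict (node [YL, YR]).labels (connect s)) := by
  have hmapL : sL.map (restrict (node [YL, YR]).labels) = sL.map (restrict YL.labels) :=
    List.map_congr_left fun t ht => by
      rw [labels_node_pair, restrict_union_of_disjoint
        (hdR.mono_right (labels_subset_olabels_connect ht)).symm]
  have hmapR : sR.map (restrict (node [YL, YR]).labels) = sR.map (restrict YR.labels) :=
    List.map_congr_left fun t ht => by
      rw [labels_node_pair, Finset.union_comm, restrict_union_of_disjoint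
        (hdL.mono_right (labels_subset_olabels_connect ht)).symm]
  rw [orestrict_connect, ← hmapL] at hL
  rw [orestrict_connect, ← hmapR] at hR
  rw [restrict_node, orestrict_connect, olabels_connect_of_listSplit hsplit]
  simp only [List.map_cons, List.map_nil, restrict_union_of_disjoint hdL]
  rw [Finset.union_comm, restrict_union_of_disjoint hdR]
  exact hL.connect_pair hR (hsplit.map _).reduceOption

variable {k : ℕ}

theorem IsBipartite.olabels_eq_union {A AL AR : Fin k → Option (PTree α)}
    (h : IsBipartite A AL AR) (i : Fin k) : olabels (A i) = olabels (AL i) ∪ olabels (AR i) := by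
  obtain ⟨s, sL, sR, hA, hsplit, hAL, hAR⟩ := h i
  rw [hA, hAL, hAR, olabels_connect_of_listSplit hsplit]

theorem IsBipartite.disjoint_olabels {𝒯 : Fin k → PTree α} {A AL AR : Fin k → Option (PTree α)}
    (h𝒯 : ∀ i, (𝒯 i).labelList.Nodup) (hA : ∀ i, IsCutSubtree (𝒯 i) (A i))
    (h : IsBipartite A AL AR) (i : Fin k) : Disjoint (olabels (AL i)) (olabels (AR i)) := by
  obtain ⟨s, sL, sR, hAs, hsplit, hAL, hAR⟩ := h i
  rw [hAL, hAR]
  exact disjoint_olabels_connect_of_listSplit (h𝒯 i) (hAs ▸ hA i) hsplit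

theorem IsEmbeddedSupertree.disjoint_labels {𝒯 : Fin k → PTree α} {B : Fin k → Option (PTree α)}
    {Y : PTree α} (hY : IsEmbeddedSupertree 𝒯 B Y) {i : Fin k} {C : Finset α}
    (hC : C ⊆ (𝒯 i).labels) (hBC : Disjoint (olabels (B i)) C) : Disjoint Y.labels C :=
  Finset.disjoint_left.mpr fun _ hxY hxC =>
    Finset.disjoint_left.mp hBC (hY.2.2.2 i (Finset.mem_inter.mpr ⟨hxY, hC hxC⟩)) hxC

end

end PTree

/-- If `(𝒜_L, 𝒜_R)` is a bipartite of a cut-subforest `𝒜` of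
`𝒯` and `Y_L`, `Y_R` are embedded supertrees of `𝒜_L`, `𝒜_R` respectively,
then the tree formed by connecting `Y_L` and `Y_R` to a new common root is an
embedded supertree of `𝒜`. -/
theorem maximum_agreement_supertree_stmt2
    {α : Type} [DecidableEq α] {k : ℕ} (𝒯 : Fin k → PTree α)
    (hphylo : ∀ i, (𝒯 i).labelList.Nodup)
    (A AL AR : Fin k → Option (PTree α))
    (hA : PTree.IsCutSubforest 𝒯 A)
    (hbip : PTree.IsBipartite A AL AR)
    (YL YR : PTree α)
    (hYL : PTree.IsEmbeddedSupertree 𝒯 AL YL)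
    (hYR : PTree.IsEmbeddedSupertree 𝒯 AR YR) :
    PTree.IsEmbeddedSupertree 𝒯 A (PTree.node [YL, YR]) := by
  have hsub i : PTree.olabels (AL i) ∪ PTree.olabels (AR i) ⊆ (𝒯 i).labels :=
    hbip.olabels_eq_union i ▸ (hA.1 i).olabels_subset
  have hdisj := hbip.disjoint_olabels hphylo hA.1
  have hdL i : Disjoint YL.labels (PTree.olabels (AR i)) :=
    hYL.disjoint_labels (Finset.union_subset_right (hsub i)) (hdisj i)
  have hdR i : Disjoint YR.labels (PTree.olabels (AL i)) :=
    hYR.disjoint_labels (Finset.union_subset_left (hsub i)) (hdisj i).symm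
  obtain ⟨ndL, subL, compL, capL⟩ := hYL
  obtain ⟨ndR, subR, compR, capR⟩ := hYR
  have hLR : Disjoint YL.labels YR.labels := Finset.disjoint_left.mpr fun x hxL hxR => by
    obtain ⟨i, -, hxi⟩ := Finset.mem_biUnion.mp (subL hxL)
    exact Finset.disjoint_left.mp (hdR i) hxR (capL i (Finset.mem_inter.mpr ⟨hxL, hxi⟩))
  refine ⟨?_, PTree.labels_node_pair YL YR ▸ Finset.union_subset subL subR, fun i => ?_, fun i => ?_⟩
  · rw [PTree.labelList_node, List.flatMap_cons, List.flatMap_singleton, List.nodup_append']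
    exact ⟨ndL, ndR, List.disjoint_toFinset_iff_disjoint.mp hLR⟩
  · obtain ⟨s, sL, sR, hAs, hsplit, hAL, hAR⟩ := hbip i
    have hL := compL i
    have hR := compR i
    have hdLi := hdL i
    have hdRi := hdR i
    rw [hAL] at hL hdRi
    rw [hAR] at hR hdLi
    rw [hAs]
    exact PTree.oRefines_restrict_node_pair hsplit hL hR hdLi hdRi
  · rw [PTree.labels_node_pair, Finset.union_inter_distrib_right, hbip.olabels_eq_union]
    exact Finset.union_subset_union (capL i) (capR i)
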